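/- For all matrix indices i, j with 1 ≤ i, j ≤ m, the entry c_{ij} of the Boolean product C = A×B equals 1 if and only if, in the Chomsky-normal-form grammar G′, the nonterminal C_{i₁,j₁} c-derives the substring w_{i₂}^{j₂+2δ} of w = w₁⋯w_{3d+6}, i.e. both C_{i₁,j₁} ⇒* w_{i₂}^{j₂+2δ} and S ⇒* w₁^{i₂−1} C_{i₁,j₁} w_{j₂+2δ+1}^{3d+6} hold in G′. -/

import Mathlib

/- Formalization of (part of) the reduction of Boolean matrix multiplication
to context-free grammar parsing (Lee, "Fast context-free grammar parsing
requires fast Boolean matrix multiplication"). -/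

namespace CFGBMM

/-- Nonterminals of the grammars of the reduction. -/
inductive NT : Type where
  | S : NT                 -- start symbol
  | T : NT                 -- extra symbol of the CNF grammar G'
  | W : NT                 -- derives arbitrary nonempty substrings
  | Wl : ℕ → NT            -- `W_ℓ` of G'
  | X : ℕ → NT             -- `X_ℓ` of G'
  | A : ℕ → ℕ → NT         -- `A_{p,q}`
  | B : ℕ → ℕ → NT         -- `B_{p,q}`
  | C : ℕ → ℕ → NT         -- `C_{p,q}`
deriving DecidableEq

abbrev Sym : Type := Symbol ℕ NT

/-- `d = ⌈m^(1/3)⌉`. -/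
noncomputable def dOf (m : ℕ) : ℕ := ⌈(m : ℝ) ^ ((1 : ℝ) / 3)⌉₊

/-- The substring `w_ℓ ⋯ w_r` of the input string `w = w₁ ⋯ w_{3d+6}`
(in which `w_ℓ` is just the terminal `ℓ`), as a sentential form. -/
def seg (l r : ℕ) : List Sym := (List.range' l (r + 1 - l)).map Symbol.terminal

/-- W-rules of `G`:  `W → w_ℓ W | w_ℓ`  for `1 ≤ ℓ ≤ 3d+6`. -/
def WRules (d : ℕ) : Set (ContextFreeRule ℕ NT) :=
  {r | ∃ l, 1 ≤ l ∧ l ≤ 3 * d + 6 ∧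
    (r = ⟨NT.W, [Symbol.terminal l, Symbol.nonterminal NT.W]⟩ ∨
     r = ⟨NT.W, [Symbol.terminal l]⟩)}

/-- A-rules of `G`:  `A_{i₁,j₁} → w_{i₂} W w_{j₂+δ}`  for each nonzero entry
`a_{ij}` of `A` (here `i₁ = ⌊i/d⌋`, `i₂ = (i mod d) + 2`, `δ = d + 2`). -/
def ARules (m d : ℕ) (a : ℕ → ℕ → ℕ) : Set (ContextFreeRule ℕ NT) :=
  {r | ∃ i j, 1 ≤ i ∧ i ≤ m ∧ 1 ≤ j ∧ j ≤ m ∧ a i j = 1 ∧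
    r = ⟨NT.A (i / d) (j / d),
      [Symbol.terminal (i % d + 2), Symbol.nonterminal NT.W,
       Symbol.terminal (j % d + 2 + (d + 2))]⟩}

/-- B-rules of `G`:  `B_{i₁,j₁} → w_{i₂+1+δ} W w_{j₂+2δ}`  for each nonzero
entry `b_{ij}` of `B`. -/
def BRules (m d : ℕ) (b : ℕ → ℕ → ℕ) : Set (ContextFreeRule ℕ NT) :=
  {r | ∃ i j, 1 ≤ i ∧ i ≤ m ∧ 1 ≤ j ∧ j ≤ m ∧ b i j = 1 ∧
    r = ⟨NT.B (i / d) (j / d),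
      [Symbol.terminal (i % d + 2 + 1 + (d + 2)), Symbol.nonterminal NT.W,
       Symbol.terminal (j % d + 2 + 2 * (d + 2))]⟩}

/-- C-rules:  `C_{p,q} → A_{p,r} B_{r,q}`  for all `0 ≤ p, q, r ≤ d²`. -/
def CRules (d : ℕ) : Set (ContextFreeRule ℕ NT) :=
  {r | ∃ p q t, p ≤ d ^ 2 ∧ q ≤ d ^ 2 ∧ t ≤ d ^ 2 ∧
    r = ⟨NT.C p q, [Symbol.nonterminal (NT.A p t), Symbol.nonterminal (NT.B t q)]⟩}

/-- S-rules of `G`:  `S → W C_{p,q} W`  for all `0 ≤ p, q ≤ d²`. -/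
def SRules (d : ℕ) : Set (ContextFreeRule ℕ NT) :=
  {r | ∃ p q, p ≤ d ^ 2 ∧ q ≤ d ^ 2 ∧
    r = ⟨NT.S, [Symbol.nonterminal NT.W, Symbol.nonterminal (NT.C p q),
      Symbol.nonterminal NT.W]⟩}

/-- The production set of the grammar `G` of the reduction. -/
def RulesG (m d : ℕ) (a b : ℕ → ℕ → ℕ) : Set (ContextFreeRule ℕ NT) :=
  WRules d ∪ ARules m d a ∪ BRules m d b ∪ CRules d ∪ SRules d

/-- W-rules of `G'`:  `W → W_ℓ W | w_ℓ` and `W_ℓ → w_ℓ`  for `1 ≤ ℓ ≤ 3d+6`. -/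
def WRules' (d : ℕ) : Set (ContextFreeRule ℕ NT) :=
  {r | ∃ l, 1 ≤ l ∧ l ≤ 3 * d + 6 ∧
    (r = ⟨NT.W, [Symbol.nonterminal (NT.Wl l), Symbol.nonterminal NT.W]⟩ ∨
     r = ⟨NT.W, [Symbol.terminal l]⟩ ∨
     r = ⟨NT.Wl l, [Symbol.terminal l]⟩)}

/-- A-rules of `G'`:  `A_{i₁,j₁} → W_{i₂} X_{j₂+δ}`  for each nonzero `a_{ij}`. -/
def ARules' (m d : ℕ) (a : ℕ → ℕ → ℕ) : Set (ContextFreeRule ℕ NT) :=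
  {r | ∃ i j, 1 ≤ i ∧ i ≤ m ∧ 1 ≤ j ∧ j ≤ m ∧ a i j = 1 ∧
    r = ⟨NT.A (i / d) (j / d),
      [Symbol.nonterminal (NT.Wl (i % d + 2)),
       Symbol.nonterminal (NT.X (j % d + 2 + (d + 2)))]⟩}

/-- X-rules of `G'` (first group):  `X_{j₂+δ} → W W_{j₂+δ}`  for `2 ≤ j₂ ≤ d+1`. -/
def XRules₁ (d : ℕ) : Set (ContextFreeRule ℕ NT) :=
  {r | ∃ j₂, 2 ≤ j₂ ∧ j₂ ≤ d + 1 ∧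
    r = ⟨NT.X (j₂ + (d + 2)),
      [Symbol.nonterminal NT.W, Symbol.nonterminal (NT.Wl (j₂ + (d + 2)))]⟩}

/-- B-rules of `G'`:  `B_{i₁,j₁} → W_{i₂+1+δ} X_{j₂+2δ}`  for each nonzero `b_{ij}`. -/
def BRules' (m d : ℕ) (b : ℕ → ℕ → ℕ) : Set (ContextFreeRule ℕ NT) :=
  {r | ∃ i j, 1 ≤ i ∧ i ≤ m ∧ 1 ≤ j ∧ j ≤ m ∧ b i j = 1 ∧
    r = ⟨NT.B (i / d) (j / d),
      [Symbol.nonterminal (NT.Wl (i % d + 2 + 1 + (d + 2))),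
       Symbol.nonterminal (NT.X (j % d + 2 + 2 * (d + 2)))]⟩}

/-- X-rules of `G'` (second group):  `X_{j₂+2δ} → W W_{j₂+2δ}`  for `2 ≤ j₂ ≤ d+1`. -/
def XRules₂ (d : ℕ) : Set (ContextFreeRule ℕ NT) :=
  {r | ∃ j₂, 2 ≤ j₂ ∧ j₂ ≤ d + 1 ∧
    r = ⟨NT.X (j₂ + 2 * (d + 2)),
      [Symbol.nonterminal NT.W, Symbol.nonterminal (NT.Wl (j₂ + 2 * (d + 2)))]⟩}

/-- S- and T-rules of `G'`:  `S → W T` and `T → C_{p,q} W` for all `0 ≤ p, q ≤ d²`. -/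
def STRules (d : ℕ) : Set (ContextFreeRule ℕ NT) :=
  {r | r = ⟨NT.S, [Symbol.nonterminal NT.W, Symbol.nonterminal NT.T]⟩ ∨
    ∃ p q, p ≤ d ^ 2 ∧ q ≤ d ^ 2 ∧
      r = ⟨NT.T, [Symbol.nonterminal (NT.C p q), Symbol.nonterminal NT.W]⟩}

/-- The production set of the Chomsky-normal-form grammar `G'` of the reduction. -/
def RulesG' (m d : ℕ) (a b : ℕ → ℕ → ℕ) : Set (ContextFreeRule ℕ NT) :=
  WRules' d ∪ ARules' m d a ∪ XRules₁ d ∪ BRules' m d b ∪ XRules₂ d ∪ CRules d ∪ STRules d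

/-- One rewriting step using some rule from the rule set `R`. -/
def Produces (R : Set (ContextFreeRule ℕ NT)) (u v : List Sym) : Prop :=
  ∃ r ∈ R, r.Rewrites u v

/-- The usual context-free derivation relation `⇒*` for the rule set `R`. -/
def Derives (R : Set (ContextFreeRule ℕ NT)) : List Sym → List Sym → Prop :=
  Relation.ReflTransGen (Produces R)


/-! ### General machinery for derivations over a rule set -/

section Machinery

variable {R : Set (ContextFreeRule ℕ NT)}

lemma derives_refl (u : List Sym) : Derives R u u := Relation.ReflTransGen.refl

lemma derives_trans {u v w : List Sym} (h1 : Derives R u v) (h2 : Derives R v w) :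
    Derives R u w := Relation.ReflTransGen.trans h1 h2

lemma derives_single {r : ContextFreeRule ℕ NT} (hr : r ∈ R) :
    Derives R [Symbol.nonterminal r.input] r.output :=
  Relation.ReflTransGen.single ⟨r, hr, ContextFreeRule.Rewrites.input_output⟩

lemma derives_append_left {u v : List Sym} (h : Derives R u v) (p : List Sym) :
    Derives R (p ++ u) (p ++ v) := by
  induction h with
  | refl => exact Relation.ReflTransGen.refl
  | tail _ hs ih =>
    obtain ⟨r, hr, hrw⟩ := hs
    exact ih.tail ⟨r, hr, hrw.append_left p⟩

lemma derives_append_right {u v : List Sym} (h : Derives R u v) (p : List Sym) :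
    Derives R (u ++ p) (v ++ p) := by
  induction h with
  | refl => exact Relation.ReflTransGen.refl
  | tail _ hs ih =>
    obtain ⟨r, hr, hrw⟩ := hs
    exact ih.tail ⟨r, hr, hrw.append_right p⟩

lemma derives_append {u₁ v₁ u₂ v₂ : List Sym}
    (h1 : Derives R u₁ v₁) (h2 : Derives R u₂ v₂) :
    Derives R (u₁ ++ u₂) (v₁ ++ v₂) :=
  derives_trans (derives_append_right h1 u₂) (derives_append_left h2 v₁)

lemma rewrites_append_cases {r : ContextFreeRule ℕ NT} :
    ∀ {u v w : List Sym}, r.Rewrites (u ++ v) w →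
      (∃ u', r.Rewrites u u' ∧ w = u' ++ v) ∨ (∃ v', r.Rewrites v v' ∧ w = u ++ v') := by
  intro u
  induction u with
  | nil => exact fun h => .inr ⟨_, h, rfl⟩
  | cons x u ih =>
    intro v w h
    cases h with
    | head s => exact .inl ⟨r.output ++ u, ContextFreeRule.Rewrites.head u, by simp⟩
    | cons _ h' =>
      rcases ih h' with ⟨u', hu, rfl⟩ | ⟨v', hv, rfl⟩
      · exact .inl ⟨x :: u', hu.cons x, rfl⟩
      · exact .inr ⟨v', hv, rfl⟩

lemma derives_append_split : ∀ {x w : List Sym}, Derives R x w → ∀ {u v : List Sym},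
    x = u ++ v → ∃ w₁ w₂, w = w₁ ++ w₂ ∧ Derives R u w₁ ∧ Derives R v w₂ := by
  intro x w h
  induction h using Relation.ReflTransGen.head_induction_on with
  | refl =>
    rintro u v rfl
    exact ⟨u, v, rfl, derives_refl u, derives_refl v⟩
  | head hstep _ ih =>
    rintro u v rfl
    obtain ⟨r, hr, hrw⟩ := hstep
    rcases rewrites_append_cases hrw with ⟨u', hu, rfl⟩ | ⟨v', hv, rfl⟩
    · obtain ⟨w₁, w₂, rfl, h1, h2⟩ := ih rfl
      exact ⟨w₁, w₂, rfl, Relation.ReflTransGen.head ⟨r, hr, hu⟩ h1, h2⟩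
    · obtain ⟨w₁, w₂, rfl, h1, h2⟩ := ih rfl
      exact ⟨w₁, w₂, rfl, h1, Relation.ReflTransGen.head ⟨r, hr, hv⟩ h2⟩

lemma derives_all_terminal_eq {u v : List Sym} (h : Derives R u v)
    (hu : ∀ s ∈ u, ∃ t, s = Symbol.terminal t) : v = u := by
  rcases Relation.ReflTransGen.cases_head h with rfl | ⟨z, ⟨r, hr, hrw⟩, h'⟩
  · rfl
  · exfalso
    obtain ⟨p, q, hpq, -⟩ := hrw.exists_parts
    obtain ⟨t, ht⟩ := hu (Symbol.nonterminal r.input) (by rw [hpq]; simp)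
    simp at ht

lemma derives_nt_head {N : NT} {v : List Sym}
    (h : Derives R [Symbol.nonterminal N] v) :
    v = [Symbol.nonterminal N] ∨ ∃ r ∈ R, r.input = N ∧ Derives R r.output v := by
  rcases Relation.ReflTransGen.cases_head h with rfl | ⟨z, ⟨r, hr, hrw⟩, h'⟩
  · exact .inl rfl
  · right
    obtain ⟨p, q, hin, hout⟩ := hrw.exists_parts
    cases p with
    | cons x p =>
      exfalso
      have := congrArg List.length hin
      simp at this
    | nil =>
      simp only [List.nil_append] at hin hout
      cases q with
      | cons y q =>
        exfalso
        have := congrArg List.length hin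
        simp at this
      | nil =>
        simp only [List.append_nil] at hin hout
        have hN : r.input = N := by
          have := List.head_eq_of_cons_eq hin
          injection this with h'
          exact h'.symm
        subst hout
        exact ⟨r, hr, hN, h'⟩

lemma derives_nt_terminal {N : NT} {v : List Sym}
    (h : Derives R [Symbol.nonterminal N] v)
    (hv : ∀ s ∈ v, ∃ t, s = Symbol.terminal t) :
    ∃ r ∈ R, r.input = N ∧ Derives R r.output v := by
  rcases derives_nt_head h with rfl | h'
  · obtain ⟨t, ht⟩ := hv (Symbol.nonterminal N) (by simp)
    exact absurd ht (by simp)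
  · exact h'

end Machinery

/-! ### Facts about `seg` -/

lemma seg_single (l : ℕ) : seg l l = [Symbol.terminal l] := by
  simp [seg, List.range']

lemma seg_mem_terminal {l r : ℕ} : ∀ s ∈ seg l r, ∃ t, s = Symbol.terminal t := by
  intro s hs
  simp only [seg, List.mem_map] at hs
  obtain ⟨t, -, rfl⟩ := hs
  exact ⟨t, rfl⟩

lemma seg_append {l r s : ℕ} (h1 : l ≤ r + 1) (h2 : r ≤ s) :
    seg l r ++ seg (r + 1) s = seg l s := by
  unfold seg
  rw [← List.map_append]
  have key : List.range' l (r + 1 - l) ++ List.range' (l + (r + 1 - l)) (s - r) =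
      List.range' l (r + 1 - l + (s - r)) := List.range'_append_1
  have e1 : l + (r + 1 - l) = r + 1 := by omega
  have e2 : r + 1 - l + (s - r) = s + 1 - l := by omega
  have e3 : s + 1 - (r + 1) = s - r := by omega
  rw [e1, e2] at key
  rw [e3, key]

lemma seg_ends {l r : ℕ} (h : l + 2 ≤ r) :
    [Symbol.terminal l] ++ (seg (l + 1) (r - 1) ++ [Symbol.terminal r]) = seg l r := by
  have h1 : seg l l ++ seg (l + 1) (r - 1) = seg l (r - 1) := seg_append (by omega) (by omega)
  have h2 : seg l (r - 1) ++ seg (r - 1 + 1) r = seg l r := seg_append (by omega) (by omega)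
  have e : r - 1 + 1 = r := by omega
  rw [e, seg_single r] at h2
  rw [seg_single l] at h1
  rw [← h2, ← h1, List.append_assoc]

lemma range'_map_eq_parts : ∀ (s₁ : List Sym) {l n v : ℕ} (s₂ : List Sym),
    (List.range' l n).map Symbol.terminal = s₁ ++ Symbol.terminal v :: s₂ →
    v = l + s₁.length := by
  intro s₁
  induction s₁ with
  | nil =>
    intro l n v s₂ h
    cases n with
    | zero => simp at h
    | succ n =>
      rw [List.range'_succ] at h
      simp only [List.map_cons, List.nil_append, List.cons.injEq] at h
      have := h.1
      injection this with h'
      simp [h']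
  | cons x s₁ ih =>
    intro l n v s₂ h
    cases n with
    | zero => simp at h
    | succ n =>
      rw [List.range'_succ] at h
      simp only [List.map_cons, List.cons_append, List.cons.injEq] at h
      have := ih s₂ h.2
      simp only [List.length_cons]
      omega


/-! ### Facts about `dOf` -/

lemma one_le_dOf {m : ℕ} (hm : 1 ≤ m) : 1 ≤ dOf m := by
  rw [dOf, Nat.one_le_iff_ne_zero, ← Nat.pos_iff_ne_zero, Nat.ceil_pos]
  have : (0 : ℝ) < m := by exact_mod_cast hm
  positivity

lemma le_dOf_cubed {m : ℕ} (hm : 1 ≤ m) : m ≤ dOf m ^ 3 := by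
  have h0 : (0 : ℝ) ≤ m := by positivity
  have h1 : ((m : ℝ)) ^ ((1 : ℝ) / 3) ≤ (dOf m : ℝ) := Nat.le_ceil _
  have h2 : (m : ℝ) ≤ (dOf m : ℝ) ^ (3 : ℕ) := by
    calc (m : ℝ) = (((m : ℝ)) ^ ((1 : ℝ) / 3)) ^ (3 : ℕ) := by
          rw [← Real.rpow_natCast (((m : ℝ)) ^ ((1 : ℝ) / 3)) 3, ← Real.rpow_mul h0]
          norm_num
      _ ≤ (dOf m : ℝ) ^ (3 : ℕ) := by
          exact pow_le_pow_left₀ (by positivity) h1 3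
  exact_mod_cast h2

lemma div_le_d_sq {m i : ℕ} (hm : 1 ≤ m) (hi : i ≤ m) : i / dOf m ≤ dOf m ^ 2 := by
  have hd := one_le_dOf hm
  have h3 := le_dOf_cubed hm
  have : i / dOf m ≤ dOf m ^ 3 / dOf m := Nat.div_le_div_right (le_trans hi h3)
  have e : dOf m ^ 3 / dOf m = dOf m ^ 2 := by
    rw [pow_succ]
    exact Nat.mul_div_cancel _ (by omega)
  omega

/-! ### Membership helpers for `RulesG'` -/

section Mem
variable {m d : ℕ} {a b : ℕ → ℕ → ℕ} {r : ContextFreeRule ℕ NT}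

lemma memG'_W (h : r ∈ WRules' d) : r ∈ RulesG' m d a b :=
  Or.inl (Or.inl (Or.inl (Or.inl (Or.inl (Or.inl h)))))

lemma memG'_A (h : r ∈ ARules' m d a) : r ∈ RulesG' m d a b :=
  Or.inl (Or.inl (Or.inl (Or.inl (Or.inl (Or.inr h)))))

lemma memG'_X1 (h : r ∈ XRules₁ d) : r ∈ RulesG' m d a b :=
  Or.inl (Or.inl (Or.inl (Or.inl (Or.inr h))))

lemma memG'_B (h : r ∈ BRules' m d b) : r ∈ RulesG' m d a b :=
  Or.inl (Or.inl (Or.inl (Or.inr h)))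

lemma memG'_X2 (h : r ∈ XRules₂ d) : r ∈ RulesG' m d a b :=
  Or.inl (Or.inl (Or.inr h))

lemma memG'_C (h : r ∈ CRules d) : r ∈ RulesG' m d a b :=
  Or.inl (Or.inr h)

lemma memG'_ST (h : r ∈ STRules d) : r ∈ RulesG' m d a b :=
  Or.inr h

end Mem

/-! ### Forward: the `W` nonterminal derives any nonempty in-range segment -/

lemma W_derives_range' (m d : ℕ) (a b : ℕ → ℕ → ℕ) :
    ∀ n l, 1 ≤ l → l + n ≤ 3 * d + 7 → 1 ≤ n →
      Derives (RulesG' m d a b) [Symbol.nonterminal NT.W]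
        ((List.range' l n).map Symbol.terminal) := by
  intro n
  induction n with
  | zero => omega
  | succ n ih =>
    intro l hl hub _
    rcases Nat.eq_zero_or_pos n with rfl | hpos
    · have hmem : (⟨NT.W, [Symbol.terminal l]⟩ : ContextFreeRule ℕ NT) ∈ RulesG' m d a b :=
        memG'_W ⟨l, hl, by omega, Or.inr (Or.inl rfl)⟩
      have := derives_single (R := RulesG' m d a b) hmem
      simpa [List.range'] using this
    · have hmem : (⟨NT.W, [Symbol.nonterminal (NT.Wl l), Symbol.nonterminal NT.W]⟩ :
          ContextFreeRule ℕ NT) ∈ RulesG' m d a b :=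
        memG'_W ⟨l, hl, by omega, Or.inl rfl⟩
      have step1 := derives_single (R := RulesG' m d a b) hmem
      have hmem2 : (⟨NT.Wl l, [Symbol.terminal l]⟩ : ContextFreeRule ℕ NT) ∈ RulesG' m d a b :=
        memG'_W ⟨l, hl, by omega, Or.inr (Or.inr rfl)⟩
      have step2 := derives_single (R := RulesG' m d a b) hmem2
      have step3 := ih (l + 1) (by omega) (by omega) hpos
      have := derives_trans step1
        (derives_append (u₁ := [Symbol.nonterminal (NT.Wl l)]) step2 step3)
      rw [List.range'_succ]
      simpa using this

lemma W_derives_seg (m d : ℕ) (a b : ℕ → ℕ → ℕ) {l r : ℕ}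
    (h1 : 1 ≤ l) (h2 : l ≤ r) (h3 : r ≤ 3 * d + 6) :
    Derives (RulesG' m d a b) [Symbol.nonterminal NT.W] (seg l r) :=
  W_derives_range' m d a b (r + 1 - l) l h1 (by omega) (by omega)

/-! ### Backward: classification of rules by their input nonterminal -/

section Elim
variable {m d : ℕ} {a b : ℕ → ℕ → ℕ} {r : ContextFreeRule ℕ NT}

lemma input_C_elim (h : r ∈ RulesG' m d a b) {p q : ℕ} (hin : r.input = NT.C p q) :
    ∃ t, t ≤ d ^ 2 ∧
      r.output = [Symbol.nonterminal (NT.A p t), Symbol.nonterminal (NT.B t q)] := by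
  rcases h with ((((((h | h) | h) | h) | h) | h) | h)
  · obtain ⟨l, -, -, (rfl | rfl | rfl)⟩ := h <;> simp at hin
  · obtain ⟨i, j, -, -, -, -, -, rfl⟩ := h; simp at hin
  · obtain ⟨j₂, -, -, rfl⟩ := h; simp at hin
  · obtain ⟨i, j, -, -, -, -, -, rfl⟩ := h; simp at hin
  · obtain ⟨j₂, -, -, rfl⟩ := h; simp at hin
  · obtain ⟨p', q', t, -, -, ht, rfl⟩ := h
    simp only at hin
    injection hin with h1 h2
    subst h1; subst h2
    exact ⟨t, ht, rfl⟩
  · rcases h with rfl | ⟨p', q', -, -, rfl⟩ <;> simp at hin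

lemma input_A_elim (h : r ∈ RulesG' m d a b) {p q : ℕ} (hin : r.input = NT.A p q) :
    ∃ i j, 1 ≤ i ∧ i ≤ m ∧ 1 ≤ j ∧ j ≤ m ∧ a i j = 1 ∧ i / d = p ∧ j / d = q ∧
      r.output = [Symbol.nonterminal (NT.Wl (i % d + 2)),
        Symbol.nonterminal (NT.X (j % d + 2 + (d + 2)))] := by
  rcases h with ((((((h | h) | h) | h) | h) | h) | h)
  · obtain ⟨l, -, -, (rfl | rfl | rfl)⟩ := h <;> simp at hin
  · obtain ⟨i, j, hi1, him, hj1, hjm, hij, rfl⟩ := h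
    simp only at hin
    injection hin with h1 h2
    exact ⟨i, j, hi1, him, hj1, hjm, hij, h1, h2, rfl⟩
  · obtain ⟨j₂, -, -, rfl⟩ := h; simp at hin
  · obtain ⟨i, j, -, -, -, -, -, rfl⟩ := h; simp at hin
  · obtain ⟨j₂, -, -, rfl⟩ := h; simp at hin
  · obtain ⟨p', q', t, -, -, -, rfl⟩ := h; simp at hin
  · rcases h with rfl | ⟨p', q', -, -, rfl⟩ <;> simp at hin

lemma input_B_elim (h : r ∈ RulesG' m d a b) {p q : ℕ} (hin : r.input = NT.B p q) :
    ∃ i j, 1 ≤ i ∧ i ≤ m ∧ 1 ≤ j ∧ j ≤ m ∧ b i j = 1 ∧ i / d = p ∧ j / d = q ∧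
      r.output = [Symbol.nonterminal (NT.Wl (i % d + 2 + 1 + (d + 2))),
        Symbol.nonterminal (NT.X (j % d + 2 + 2 * (d + 2)))] := by
  rcases h with ((((((h | h) | h) | h) | h) | h) | h)
  · obtain ⟨l, -, -, (rfl | rfl | rfl)⟩ := h <;> simp at hin
  · obtain ⟨i, j, -, -, -, -, -, rfl⟩ := h; simp at hin
  · obtain ⟨j₂, -, -, rfl⟩ := h; simp at hin
  · obtain ⟨i, j, hi1, him, hj1, hjm, hij, rfl⟩ := h
    simp only at hin
    injection hin with h1 h2
    exact ⟨i, j, hi1, him, hj1, hjm, hij, h1, h2, rfl⟩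
  · obtain ⟨j₂, -, -, rfl⟩ := h; simp at hin
  · obtain ⟨p', q', t, -, -, -, rfl⟩ := h; simp at hin
  · rcases h with rfl | ⟨p', q', -, -, rfl⟩ <;> simp at hin

lemma input_X_elim (h : r ∈ RulesG' m d a b) {n : ℕ} (hin : r.input = NT.X n) :
    r.output = [Symbol.nonterminal NT.W, Symbol.nonterminal (NT.Wl n)] := by
  rcases h with ((((((h | h) | h) | h) | h) | h) | h)
  · obtain ⟨l, -, -, (rfl | rfl | rfl)⟩ := h <;> simp at hin
  · obtain ⟨i, j, -, -, -, -, -, rfl⟩ := h; simp at hin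
  · obtain ⟨j₂, -, -, rfl⟩ := h
    simp only at hin
    injection hin with h1
    subst h1; rfl
  · obtain ⟨i, j, -, -, -, -, -, rfl⟩ := h; simp at hin
  · obtain ⟨j₂, -, -, rfl⟩ := h
    simp only at hin
    injection hin with h1
    subst h1; rfl
  · obtain ⟨p', q', t, -, -, -, rfl⟩ := h; simp at hin
  · rcases h with rfl | ⟨p', q', -, -, rfl⟩ <;> simp at hin

lemma input_Wl_elim (h : r ∈ RulesG' m d a b) {n : ℕ} (hin : r.input = NT.Wl n) :
    r.output = [Symbol.terminal n] := by
  rcases h with ((((((h | h) | h) | h) | h) | h) | h)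
  · obtain ⟨l, -, -, (rfl | rfl | rfl)⟩ := h
    · simp at hin
    · simp at hin
    · simp only at hin
      injection hin with h1
      subst h1; rfl
  · obtain ⟨i, j, -, -, -, -, -, rfl⟩ := h; simp at hin
  · obtain ⟨j₂, -, -, rfl⟩ := h; simp at hin
  · obtain ⟨i, j, -, -, -, -, -, rfl⟩ := h; simp at hin
  · obtain ⟨j₂, -, -, rfl⟩ := h; simp at hin
  · obtain ⟨p', q', t, -, -, -, rfl⟩ := h; simp at hin
  · rcases h with rfl | ⟨p', q', -, -, rfl⟩ <;> simp at hin

end Elim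

/-- **Theorem 1 of the paper, for the CNF grammar `G'`.** For `1 ≤ i, j ≤ m`,
the entry `c_{ij}` of the Boolean product `C = A × B` is `1` iff, in `G'`, the
nonterminal `C_{i₁,j₁}` c-derives `w_{i₂}^{j₂+2δ}`, i.e. both
`C_{i₁,j₁} ⇒* w_{i₂}^{j₂+2δ}` and
`S ⇒* w₁^{i₂−1} C_{i₁,j₁} w_{j₂+2δ+1}^{3d+6}` hold in `G'`. -/
theorem bmm_entry_iff_cderives_cnf
    (m : ℕ) (hm : 1 ≤ m) (a b : ℕ → ℕ → ℕ)
    (ha : ∀ i j, a i j = 0 ∨ a i j = 1) (hb : ∀ i j, b i j = 0 ∨ b i j = 1)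
    (d δ : ℕ) (hd : d = dOf m) (hδ : δ = d + 2)
    (i j : ℕ) (hi1 : 1 ≤ i) (him : i ≤ m) (hj1 : 1 ≤ j) (hjm : j ≤ m) :
    (∃ k, 1 ≤ k ∧ k ≤ m ∧ a i k = 1 ∧ b k j = 1) ↔
      (Derives (RulesG' m d a b) [Symbol.nonterminal (NT.C (i / d) (j / d))]
          (seg (i % d + 2) (j % d + 2 + 2 * δ)) ∧
       Derives (RulesG' m d a b) [Symbol.nonterminal NT.S]
          (seg 1 (i % d + 2 - 1) ++ [Symbol.nonterminal (NT.C (i / d) (j / d))] ++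
            seg (j % d + 2 + 2 * δ + 1) (3 * d + 6))) := by
  subst hδ
  have hd1 : 1 ≤ d := hd ▸ one_le_dOf hm
  have hidq : i / d ≤ d ^ 2 := by rw [hd]; exact div_le_d_sq hm him
  have hjdq : j / d ≤ d ^ 2 := by rw [hd]; exact div_le_d_sq hm hjm
  have himod : i % d < d := Nat.mod_lt _ (by omega)
  have hjmod : j % d < d := Nat.mod_lt _ (by omega)
  set R' := RulesG' m d a b with hR'
  constructor
  · -- forward direction
    rintro ⟨k, hk1, hkm, hak, hbk⟩
    have hkdq : k / d ≤ d ^ 2 := by rw [hd]; exact div_le_d_sq hm hkm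
    have hkmod : k % d < d := Nat.mod_lt _ (by omega)
    -- the first step C → A B
    have hCrule : (⟨NT.C (i / d) (j / d),
        [Symbol.nonterminal (NT.A (i / d) (k / d)),
         Symbol.nonterminal (NT.B (k / d) (j / d))]⟩ : ContextFreeRule ℕ NT) ∈ R' :=
      memG'_C ⟨i / d, j / d, k / d, hidq, hjdq, hkdq, rfl⟩
    -- the A part
    have hArule : (⟨NT.A (i / d) (k / d),
        [Symbol.nonterminal (NT.Wl (i % d + 2)),
         Symbol.nonterminal (NT.X (k % d + 2 + (d + 2)))]⟩ : ContextFreeRule ℕ NT) ∈ R' :=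
      memG'_A ⟨i, k, hi1, him, hk1, hkm, hak, rfl⟩
    have hWli : (⟨NT.Wl (i % d + 2), [Symbol.terminal (i % d + 2)]⟩ :
        ContextFreeRule ℕ NT) ∈ R' :=
      memG'_W ⟨i % d + 2, by omega, by omega, Or.inr (Or.inr rfl)⟩
    have hX1 : (⟨NT.X (k % d + 2 + (d + 2)),
        [Symbol.nonterminal NT.W, Symbol.nonterminal (NT.Wl (k % d + 2 + (d + 2)))]⟩ :
        ContextFreeRule ℕ NT) ∈ R' :=
      memG'_X1 ⟨k % d + 2, by omega, by omega, rfl⟩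
    have hWlkA : (⟨NT.Wl (k % d + 2 + (d + 2)), [Symbol.terminal (k % d + 2 + (d + 2))]⟩ :
        ContextFreeRule ℕ NT) ∈ R' :=
      memG'_W ⟨k % d + 2 + (d + 2), by omega, by omega, Or.inr (Or.inr rfl)⟩
    have hA : Derives R' [Symbol.nonterminal (NT.A (i / d) (k / d))]
        (seg (i % d + 2) (k % d + 2 + (d + 2))) := by
      refine derives_trans (derives_single hArule) ?_
      rw [← seg_ends (show i % d + 2 + 2 ≤ k % d + 2 + (d + 2) by omega)]
      exact derives_append (u₁ := [Symbol.nonterminal (NT.Wl (i % d + 2))])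
        (u₂ := [Symbol.nonterminal (NT.X (k % d + 2 + (d + 2)))])
        (derives_single hWli)
        (derives_trans (derives_single hX1)
          (derives_append (u₁ := [Symbol.nonterminal NT.W])
            (u₂ := [Symbol.nonterminal (NT.Wl (k % d + 2 + (d + 2)))])
            (W_derives_seg m d a b (l := i % d + 2 + 1) (r := k % d + 2 + (d + 2) - 1)
              (by omega) (by omega) (by omega))
            (derives_single hWlkA)))
    -- the B part
    have hBrule : (⟨NT.B (k / d) (j / d),
        [Symbol.nonterminal (NT.Wl (k % d + 2 + 1 + (d + 2))),
         Symbol.nonterminal (NT.X (j % d + 2 + 2 * (d + 2)))]⟩ : ContextFreeRule ℕ NT) ∈ R' :=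
      memG'_B ⟨k, j, hk1, hkm, hj1, hjm, hbk, rfl⟩
    have hWlkB : (⟨NT.Wl (k % d + 2 + 1 + (d + 2)), [Symbol.terminal (k % d + 2 + 1 + (d + 2))]⟩ :
        ContextFreeRule ℕ NT) ∈ R' :=
      memG'_W ⟨k % d + 2 + 1 + (d + 2), by omega, by omega, Or.inr (Or.inr rfl)⟩
    have hX2 : (⟨NT.X (j % d + 2 + 2 * (d + 2)),
        [Symbol.nonterminal NT.W, Symbol.nonterminal (NT.Wl (j % d + 2 + 2 * (d + 2)))]⟩ :
        ContextFreeRule ℕ NT) ∈ R' :=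
      memG'_X2 ⟨j % d + 2, by omega, by omega, rfl⟩
    have hWljB : (⟨NT.Wl (j % d + 2 + 2 * (d + 2)), [Symbol.terminal (j % d + 2 + 2 * (d + 2))]⟩ :
        ContextFreeRule ℕ NT) ∈ R' :=
      memG'_W ⟨j % d + 2 + 2 * (d + 2), by omega, by omega, Or.inr (Or.inr rfl)⟩
    have hB : Derives R' [Symbol.nonterminal (NT.B (k / d) (j / d))]
        (seg (k % d + 2 + 1 + (d + 2)) (j % d + 2 + 2 * (d + 2))) := by
      refine derives_trans (derives_single hBrule) ?_
      rw [← seg_ends (show k % d + 2 + 1 + (d + 2) + 2 ≤ j % d + 2 + 2 * (d + 2) by omega)]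
      exact derives_append (u₁ := [Symbol.nonterminal (NT.Wl (k % d + 2 + 1 + (d + 2)))])
        (u₂ := [Symbol.nonterminal (NT.X (j % d + 2 + 2 * (d + 2)))])
        (derives_single hWlkB)
        (derives_trans (derives_single hX2)
          (derives_append (u₁ := [Symbol.nonterminal NT.W])
            (u₂ := [Symbol.nonterminal (NT.Wl (j % d + 2 + 2 * (d + 2)))])
            (W_derives_seg m d a b (l := k % d + 2 + 1 + (d + 2) + 1)
              (r := j % d + 2 + 2 * (d + 2) - 1) (by omega) (by omega) (by omega))
            (derives_single hWljB)))
    rw [show k % d + 2 + 1 + (d + 2) = k % d + 2 + (d + 2) + 1 by omega] at hB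
    have hC : Derives R' [Symbol.nonterminal (NT.C (i / d) (j / d))]
        (seg (i % d + 2) (j % d + 2 + 2 * (d + 2))) := by
      refine derives_trans (derives_single hCrule) ?_
      rw [← seg_append (show i % d + 2 ≤ k % d + 2 + (d + 2) + 1 by omega)
        (show k % d + 2 + (d + 2) ≤ j % d + 2 + 2 * (d + 2) by omega)]
      exact derives_append (u₁ := [Symbol.nonterminal (NT.A (i / d) (k / d))])
        (u₂ := [Symbol.nonterminal (NT.B (k / d) (j / d))]) hA hB
    refine ⟨hC, ?_⟩
    -- the S derivation
    have hSrule : (⟨NT.S, [Symbol.nonterminal NT.W, Symbol.nonterminal NT.T]⟩ :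
        ContextFreeRule ℕ NT) ∈ R' := memG'_ST (Or.inl rfl)
    have hTrule : (⟨NT.T, [Symbol.nonterminal (NT.C (i / d) (j / d)),
        Symbol.nonterminal NT.W]⟩ : ContextFreeRule ℕ NT) ∈ R' :=
      memG'_ST (Or.inr ⟨i / d, j / d, hidq, hjdq, rfl⟩)
    refine derives_trans (derives_single hSrule) ?_
    rw [List.append_assoc]
    refine derives_append (u₁ := [Symbol.nonterminal NT.W]) (u₂ := [Symbol.nonterminal NT.T])
      (W_derives_seg m d a b (by omega) (by omega) (by omega)) ?_
    refine derives_trans (derives_single hTrule) ?_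
    exact derives_append (u₁ := [Symbol.nonterminal (NT.C (i / d) (j / d))])
      (u₂ := [Symbol.nonterminal NT.W])
      (derives_refl _)
      (W_derives_seg m d a b (by omega) (by omega) (by omega))
  · -- backward direction
    rintro ⟨hC, -⟩
    obtain ⟨r₀, hr₀, hin₀, hder₀⟩ := derives_nt_terminal hC seg_mem_terminal
    obtain ⟨t, ht, hout₀⟩ := input_C_elim hr₀ hin₀
    rw [hout₀] at hder₀
    obtain ⟨u₁, u₂, hsplit, hdA, hdB⟩ := derives_append_split hder₀
      (u := [Symbol.nonterminal (NT.A (i / d) t)])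
      (v := [Symbol.nonterminal (NT.B t (j / d))]) rfl
    -- analyze the A part
    have hu₁t : ∀ s ∈ u₁, ∃ t', s = Symbol.terminal t' := fun s hs =>
      seg_mem_terminal s (by rw [hsplit]; exact List.mem_append_left _ hs)
    obtain ⟨rA, hrA, hinA, hdA2⟩ := derives_nt_terminal hdA hu₁t
    obtain ⟨i', k', hi'1, hi'm, hk'1, hk'm, hai', hdivi', hdivk', houtA⟩ :=
      input_A_elim hrA hinA
    rw [houtA] at hdA2
    obtain ⟨p₁, p₂, hu₁eq, hdWl, hdX⟩ := derives_append_split hdA2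
      (u := [Symbol.nonterminal (NT.Wl (i' % d + 2))])
      (v := [Symbol.nonterminal (NT.X (k' % d + 2 + (d + 2)))]) rfl
    have hp₁t : ∀ s ∈ p₁, ∃ t', s = Symbol.terminal t' := fun s hs =>
      hu₁t s (by rw [hu₁eq]; exact List.mem_append_left _ hs)
    obtain ⟨rW, hrW, hinW, hdW2⟩ := derives_nt_terminal hdWl hp₁t
    rw [input_Wl_elim hrW hinW] at hdW2
    have hp₁ : p₁ = [Symbol.terminal (i' % d + 2)] :=
      derives_all_terminal_eq hdW2 (by simp)
    have hp₂t : ∀ s ∈ p₂, ∃ t', s = Symbol.terminal t' := fun s hs =>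
      hu₁t s (by rw [hu₁eq]; exact List.mem_append_right _ hs)
    obtain ⟨rX, hrX, hinX, hdX2⟩ := derives_nt_terminal hdX hp₂t
    rw [input_X_elim hrX hinX] at hdX2
    obtain ⟨q₁, q₂, hp₂eq, -, hdWl2⟩ := derives_append_split hdX2
      (u := [Symbol.nonterminal NT.W])
      (v := [Symbol.nonterminal (NT.Wl (k' % d + 2 + (d + 2)))]) rfl
    have hq₂t : ∀ s ∈ q₂, ∃ t', s = Symbol.terminal t' := fun s hs =>
      hp₂t s (by rw [hp₂eq]; exact List.mem_append_right _ hs)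
    obtain ⟨rW2, hrW2, hinW2, hdW3⟩ := derives_nt_terminal hdWl2 hq₂t
    rw [input_Wl_elim hrW2 hinW2] at hdW3
    have hq₂ : q₂ = [Symbol.terminal (k' % d + 2 + (d + 2))] :=
      derives_all_terminal_eq hdW3 (by simp)
    -- analyze the B part
    have hu₂t : ∀ s ∈ u₂, ∃ t', s = Symbol.terminal t' := fun s hs =>
      seg_mem_terminal s (by rw [hsplit]; exact List.mem_append_right _ hs)
    obtain ⟨rB, hrB, hinB, hdB2⟩ := derives_nt_terminal hdB hu₂t
    obtain ⟨i'', j'', hi''1, hi''m, hj''1, hj''m, hbi'', hdivi'', hdivj'', houtB⟩ :=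
      input_B_elim hrB hinB
    rw [houtB] at hdB2
    obtain ⟨p₁', p₂', hu₂eq, hdWl', hdX'⟩ := derives_append_split hdB2
      (u := [Symbol.nonterminal (NT.Wl (i'' % d + 2 + 1 + (d + 2)))])
      (v := [Symbol.nonterminal (NT.X (j'' % d + 2 + 2 * (d + 2)))]) rfl
    have hp₁'t : ∀ s ∈ p₁', ∃ t', s = Symbol.terminal t' := fun s hs =>
      hu₂t s (by rw [hu₂eq]; exact List.mem_append_left _ hs)
    obtain ⟨rW', hrW', hinW', hdW2'⟩ := derives_nt_terminal hdWl' hp₁'t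
    rw [input_Wl_elim hrW' hinW'] at hdW2'
    have hp₁' : p₁' = [Symbol.terminal (i'' % d + 2 + 1 + (d + 2))] :=
      derives_all_terminal_eq hdW2' (by simp)
    have hp₂'t : ∀ s ∈ p₂', ∃ t', s = Symbol.terminal t' := fun s hs =>
      hu₂t s (by rw [hu₂eq]; exact List.mem_append_right _ hs)
    obtain ⟨rX', hrX', hinX', hdX2'⟩ := derives_nt_terminal hdX' hp₂'t
    rw [input_X_elim hrX' hinX'] at hdX2'
    obtain ⟨q₁', q₂', hp₂'eq, -, hdWl2'⟩ := derives_append_split hdX2'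
      (u := [Symbol.nonterminal NT.W])
      (v := [Symbol.nonterminal (NT.Wl (j'' % d + 2 + 2 * (d + 2)))]) rfl
    have hq₂'t : ∀ s ∈ q₂', ∃ t', s = Symbol.terminal t' := fun s hs =>
      hp₂'t s (by rw [hp₂'eq]; exact List.mem_append_right _ hs)
    obtain ⟨rW2', hrW2', hinW2', hdW3'⟩ := derives_nt_terminal hdWl2' hq₂'t
    rw [input_Wl_elim hrW2' hinW2'] at hdW3'
    have hq₂' : q₂' = [Symbol.terminal (j'' % d + 2 + 2 * (d + 2))] :=
      derives_all_terminal_eq hdW3' (by simp)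
    -- assemble the flat equation
    rw [hu₁eq, hu₂eq, hp₁, hp₂eq, hq₂, hp₁', hp₂'eq, hq₂'] at hsplit
    rw [seg] at hsplit
    simp only [List.cons_append, List.append_assoc, List.nil_append, List.singleton_append,
      List.append_nil] at hsplit
    have hlen := congrArg List.length hsplit
    simp only [List.length_map, List.length_range', List.length_cons, List.length_append,
      List.length_nil] at hlen
    have e1 := range'_map_eq_parts []
      (q₁ ++ Symbol.terminal (k' % d + 2 + (d + 2)) ::
        Symbol.terminal (i'' % d + 2 + 1 + (d + 2)) :: (q₁' ++
          [Symbol.terminal (j'' % d + 2 + 2 * (d + 2))]))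
      (v := i' % d + 2)
      (by simp only [List.cons_append, List.append_assoc, List.nil_append,
        List.singleton_append, List.append_nil]; exact hsplit)
    have e2 := range'_map_eq_parts (Symbol.terminal (i' % d + 2) :: q₁)
      (Symbol.terminal (i'' % d + 2 + 1 + (d + 2)) :: (q₁' ++
        [Symbol.terminal (j'' % d + 2 + 2 * (d + 2))]))
      (v := k' % d + 2 + (d + 2))
      (by simp only [List.cons_append, List.append_assoc, List.nil_append,
        List.singleton_append, List.append_nil]; exact hsplit)
    have e3 := range'_map_eq_parts
      (Symbol.terminal (i' % d + 2) :: (q₁ ++ [Symbol.terminal (k' % d + 2 + (d + 2))]))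
      (q₁' ++ [Symbol.terminal (j'' % d + 2 + 2 * (d + 2))])
      (v := i'' % d + 2 + 1 + (d + 2))
      (by simp only [List.cons_append, List.append_assoc, List.nil_append,
        List.singleton_append, List.append_nil]; exact hsplit)
    have e4 := range'_map_eq_parts
      (Symbol.terminal (i' % d + 2) :: (q₁ ++ Symbol.terminal (k' % d + 2 + (d + 2)) ::
        Symbol.terminal (i'' % d + 2 + 1 + (d + 2)) :: q₁'))
      []
      (v := j'' % d + 2 + 2 * (d + 2))
      (by simp only [List.cons_append, List.append_assoc, List.nil_append,
        List.singleton_append, List.append_nil]; exact hsplit)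
    simp only [List.length_cons, List.length_append, List.length_nil] at e1 e2 e3 e4
    -- now extract the index equalities
    have hmi : i' % d = i % d := by omega
    have hmk : i'' % d = k' % d := by omega
    have hmj : j'' % d = j % d := by omega
    have hii : i' = i := by
      have h1 := Nat.div_add_mod i' d
      have h2 := Nat.div_add_mod i d
      rw [hdivi', hmi] at h1
      exact h1.symm.trans h2
    have hkk : i'' = k' := by
      have h1 := Nat.div_add_mod i'' d
      have h2 := Nat.div_add_mod k' d
      rw [hdivi'', ← hdivk', hmk] at h1
      exact h1.symm.trans h2
    have hjj : j'' = j := by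
      have h1 := Nat.div_add_mod j'' d
      have h2 := Nat.div_add_mod j d
      rw [hdivj'', hmj] at h1
      exact h1.symm.trans h2
    refine ⟨k', hk'1, hk'm, ?_, ?_⟩
    · rwa [hii] at hai'
    · rwa [hkk, hjj] at hbi''

end CFGBMM
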